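/- arXiv:2105.05243 — 8 statements merged into one kernel-verified Lean document; each statement's English description precedes it below -/
import Mathlib

section
/- Let n be a positive integer, let p_1, ..., p_n be reals with 0 < p_i ≤ 1 for each i, let c > 0, and for each i let V_i : ℝ → ℝ be continuous, nondecreasing and concave on [0,1] with V_i(0) = 0. Consider the feasible set D = {α ∈ ℝ^n : 0 ≤ α_i ≤ 1 for all i, and Σ_i α_i ≤ c} and the objective F(α) = Σ_i V_i(max(p_i − α_i, 0)). Then F attains its minimum over D at some point α* ∈ D such that the number of indices i with 0 < α*_i < p_i is at most one. -/
/-!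
On `K = {α | 0 ≤ αᵢ ≤ pᵢ, ∑ αᵢ ≤ c}` the truncation `max (pᵢ - αᵢ) 0` is inactive, so the cost
`∑ Vᵢ (pᵢ - αᵢ)` is concave there, and `β ↦ β ⊓ p` maps every feasible `β` into `K` without
changing its cost. The minimizers of a concave function on a compact set form an extreme subset,
so by the Krein–Milman lemma some minimizer is an extreme point of `K`. An extreme point of `K`
has at most one fractional coordinate: with two of them, `i ≠ j`, shifting a small mass `±t` from
`i` to `j` stays in `K` and writes the point as a midpoint.
-/

open Set

theorem concaveOn_finsetSum {E ι : Type*} [AddCommGroup E] [Module ℝ E] {s : Set E}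
    (hs : Convex ℝ s) (t : Finset ι) {f : ι → E → ℝ} (hf : ∀ i ∈ t, ConcaveOn ℝ s (f i)) :
    ConcaveOn ℝ s (fun x => ∑ i ∈ t, f i x) := by
  classical
  induction t using Finset.induction_on with
  | empty => simpa using concaveOn_const 0 hs
  | insert a t ha ih =>
    simp_rw [Finset.sum_insert ha]
    exact (hf a (Finset.mem_insert_self a t)).add
      (ih fun i hi => hf i (Finset.mem_insert_of_mem hi))

theorem ConcaveOn.isExtreme_setOf_le {E : Type*} [AddCommGroup E] [Module ℝ E] {K : Set E}
    {f : E → ℝ} (hf : ConcaveOn ℝ K f) {m : ℝ} (hm : ∀ x ∈ K, m ≤ f x) :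
    IsExtreme ℝ K {x ∈ K | f x ≤ m} := by
  refine ⟨sep_subset _ _, fun x hx y hy z hz ⟨a, b, ha, hb, hab, hxyz⟩ => ⟨hx, ?_⟩⟩
  have hconc := hf.2 hx hy ha.le hb.le hab
  rw [hxyz, smul_eq_mul, smul_eq_mul] at hconc
  have hy_ge := hm y hy
  have hbm := mul_le_mul_of_nonneg_left hy_ge hb.le
  have ham : a * m = m - b * m := by linear_combination m * hab
  have : a * f x ≤ a * m := by linarith [hz.2]
  exact le_of_mul_le_mul_left this ha

theorem ConcaveOn.exists_isMinOn_mem_extremePoints {E : Type*} [AddCommGroup E] [Module ℝ E]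
    [TopologicalSpace E] [T2Space E] [IsTopologicalAddGroup E] [ContinuousSMul ℝ E]
    [LocallyConvexSpace ℝ E] {K : Set E} {f : E → ℝ} (hK : IsCompact K) (hne : K.Nonempty)
    (hf : ConcaveOn ℝ K f) (hfc : ContinuousOn f K) :
    ∃ x ∈ K.extremePoints ℝ, IsMinOn f K x := by
  obtain ⟨x₀, hx₀, hmin⟩ := hK.exists_isMinOn hne hfc
  have hext := hf.isExtreme_setOf_le (m := f x₀) fun x hx => hmin hx
  have hcomp : IsCompact {x ∈ K | f x ≤ f x₀} :=
    hK.of_isClosed_subset (hfc.preimage_isClosed_of_isClosed hK.isClosed isClosed_Iic)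
      (sep_subset _ _)
  obtain ⟨x, hx⟩ := hcomp.extremePoints_nonempty ⟨x₀, hx₀, le_rfl⟩
  exact ⟨x, hext.extremePoints_subset_extremePoints hx, fun y hy => hx.1.2.trans (hmin hy)⟩

variable {ι : Type*} [Fintype ι]

def cappedBudgetSet (p : ι → ℝ) (c : ℝ) : Set (ι → ℝ) :=
  univ.pi (fun i => Icc 0 (p i)) ∩ {α | ∑ i, α i ≤ c}

def residualCost (p : ι → ℝ) (V : ι → ℝ → ℝ) (α : ι → ℝ) : ℝ :=
  ∑ i, V i (max (p i - α i) 0)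

section
variable {p : ι → ℝ} {c : ℝ}

variable (p c) in
theorem isCompact_cappedBudgetSet : IsCompact (cappedBudgetSet p c) :=
  (isCompact_univ_pi fun _ => isCompact_Icc).inter_right
    (isClosed_le (continuous_finsetSum _ fun i _ => continuous_apply i) continuous_const)

variable (p c) in
theorem convex_cappedBudgetSet : Convex ℝ (cappedBudgetSet p c) :=
  (convex_pi fun _ _ => convex_Icc _ _).inter <| convex_halfSpace_le
    ⟨fun x y => by simp [Finset.sum_add_distrib], fun a x => by simp [Finset.mul_sum]⟩ c

theorem zero_mem_cappedBudgetSet (hp : ∀ i, 0 ≤ p i) (hc : 0 ≤ c) :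
    0 ∈ cappedBudgetSet p c :=
  ⟨fun i _ => ⟨le_rfl, hp i⟩, by simpa using hc⟩

theorem inf_mem_cappedBudgetSet (hp : ∀ i, 0 ≤ p i) {β : ι → ℝ} (hβ : ∀ i, 0 ≤ β i)
    (hβc : ∑ i, β i ≤ c) : β ⊓ p ∈ cappedBudgetSet p c :=
  ⟨fun i _ => ⟨le_inf (hβ i) (hp i), inf_le_right⟩,
    (Finset.sum_le_sum fun _ _ => inf_le_left).trans hβc⟩

theorem sub_mem_Icc_of_mem_cappedBudgetSet (hp : ∀ i, p i ≤ 1) {α : ι → ℝ}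
    (hα : α ∈ cappedBudgetSet p c) (i : ι) : p i - α i ∈ Icc (0 : ℝ) 1 := by
  obtain ⟨h0, hp'⟩ := hα.1 i (mem_univ i)
  constructor <;> linarith [hp i]

theorem add_smul_single_sub_single_mem_cappedBudgetSet [DecidableEq ι] {α : ι → ℝ}
    (hα : α ∈ cappedBudgetSet p c) {i j : ι} (hij : i ≠ j) {s : ℝ} (hi : α i - s ∈ Icc 0 (p i))
    (hj : α j + s ∈ Icc 0 (p j)) :
    α + s • (Pi.single j 1 - Pi.single i 1) ∈ cappedBudgetSet p c := by
  refine ⟨fun k _ => ?_, ?_⟩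
  · rcases eq_or_ne k i with rfl | hki
    · simpa [hij, sub_eq_add_neg] using hi
    rcases eq_or_ne k j with rfl | hkj
    · simpa [Pi.single_apply, hij.symm] using hj
    simpa [hki, hkj] using hα.1 k (mem_univ k)
  · simpa [Finset.sum_add_distrib, ← Finset.mul_sum, Finset.sum_sub_distrib] using hα.2

theorem residualCost_inf (p : ι → ℝ) (V : ι → ℝ → ℝ) (β : ι → ℝ) :
    residualCost p V (β ⊓ p) = residualCost p V β := by
  refine Finset.sum_congr rfl fun i _ => ?_
  rcases le_total (β i) (p i) with h | h
  · simp [h]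
  · simp [h, sub_nonpos.mpr h]

theorem residualCost_eqOn_cappedBudgetSet (V : ι → ℝ → ℝ) :
    EqOn (residualCost p V) (fun α => ∑ i, V i (p i - α i)) (cappedBudgetSet p c) :=
  fun _ hα => Finset.sum_congr rfl fun i _ =>
    congrArg (V i) (max_eq_left (sub_nonneg.mpr (hα.1 i (mem_univ i)).2))

theorem concaveOn_residualCost (hp : ∀ i, p i ≤ 1) {V : ι → ℝ → ℝ}
    (hV : ∀ i, ConcaveOn ℝ (Icc 0 1) (V i)) :
    ConcaveOn ℝ (cappedBudgetSet p c) (residualCost p V) := by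
  refine (concaveOn_finsetSum (convex_cappedBudgetSet p c) _ fun i _ => ?_).congr
    (residualCost_eqOn_cappedBudgetSet V).symm
  let g : (ι → ℝ) →ᵃ[ℝ] ℝ := AffineMap.const ℝ (ι → ℝ) (p i) - (LinearMap.proj i).toAffineMap
  exact ((hV i).comp_affineMap g).subset
    (fun _ hα => sub_mem_Icc_of_mem_cappedBudgetSet hp hα i) (convex_cappedBudgetSet p c)

theorem continuousOn_residualCost (hp : ∀ i, p i ≤ 1) {V : ι → ℝ → ℝ}
    (hV : ∀ i, ContinuousOn (V i) (Icc 0 1)) :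
    ContinuousOn (residualCost p V) (cappedBudgetSet p c) := by
  refine (continuousOn_finsetSum _ fun i _ => ?_).congr (residualCost_eqOn_cappedBudgetSet V)
  exact (hV i).comp (continuous_const.sub (continuous_apply i)).continuousOn
    fun α hα => sub_mem_Icc_of_mem_cappedBudgetSet hp hα i

theorem ncard_setOf_lt_lt_le_one_of_mem_extremePoints {α : ι → ℝ}
    (hα : α ∈ (cappedBudgetSet p c).extremePoints ℝ) :
    {i | 0 < α i ∧ α i < p i}.ncard ≤ 1 := by
  classical
  by_contra! h
  obtain ⟨i, j, ⟨hi0, hip⟩, ⟨hj0, hjp⟩, hij⟩ := (one_lt_ncard_iff (toFinite _)).mp h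
  set t := min (min (α i) (p i - α i)) (min (α j) (p j - α j))
  have ht : 0 < t := lt_min (lt_min hi0 (by linarith)) (lt_min hj0 (by linarith))
  have hti₁ : t ≤ α i := (min_le_left _ _).trans (min_le_left _ _)
  have hti₂ : t ≤ p i - α i := (min_le_left _ _).trans (min_le_right _ _)
  have htj₁ : t ≤ α j := (min_le_right _ _).trans (min_le_left _ _)
  have htj₂ : t ≤ p j - α j := (min_le_right _ _).trans (min_le_right _ _)
  set d : ι → ℝ := Pi.single j 1 - Pi.single i 1
  have hplus : α + t • d ∈ cappedBudgetSet p c :=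
    add_smul_single_sub_single_mem_cappedBudgetSet hα.1 hij
      ⟨by linarith, by linarith⟩ ⟨by linarith, by linarith⟩
  have hminus : α + (-t) • d ∈ cappedBudgetSet p c :=
    add_smul_single_sub_single_mem_cappedBudgetSet hα.1 hij
      ⟨by linarith, by linarith⟩ ⟨by linarith, by linarith⟩
  have hmid : α ∈ openSegment ℝ (α + t • d) (α + (-t) • d) :=
    ⟨1 / 2, 1 / 2, by norm_num, by norm_num, by norm_num, by module⟩
  have hfixed := congrFun ((mem_extremePoints.mp hα).2 _ hplus _ hminus hmid).1 i
  simp [d, hij] at hfixed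
  linarith

end

theorem stmt_0_general (n : ℕ) (p : Fin n → ℝ)
    (hp : ∀ i, 0 < p i ∧ p i ≤ 1) (c : ℝ) (hc : 0 < c)
    (V : Fin n → ℝ → ℝ)
    (hVcont : ∀ i, ContinuousOn (V i) (Set.Icc 0 1))
    (hVconc : ∀ i, ConcaveOn ℝ (Set.Icc 0 1) (V i)) :
    ∃ α : Fin n → ℝ,
      ((∀ i, 0 ≤ α i ∧ α i ≤ 1) ∧ ∑ i, α i ≤ c) ∧
      (∀ β : Fin n → ℝ, (∀ i, 0 ≤ β i ∧ β i ≤ 1) → ∑ i, β i ≤ c →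
        ∑ i, V i (max (p i - α i) 0) ≤ ∑ i, V i (max (p i - β i) 0)) ∧
      {i : Fin n | 0 < α i ∧ α i < p i}.ncard ≤ 1 := by
  have hp0 : ∀ i, 0 ≤ p i := fun i => (hp i).1.le
  have hp1 : ∀ i, p i ≤ 1 := fun i => (hp i).2
  obtain ⟨α, hαext, hαmin⟩ := (concaveOn_residualCost hp1 hVconc).exists_isMinOn_mem_extremePoints
    (isCompact_cappedBudgetSet p c) ⟨0, zero_mem_cappedBudgetSet hp0 hc.le⟩
    (continuousOn_residualCost hp1 hVcont)
  obtain ⟨hαbox, hαc⟩ := hαext.1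
  refine ⟨α, ⟨fun i => ?_, hαc⟩, fun β hβ hβc => ?_,
    ncard_setOf_lt_lt_le_one_of_mem_extremePoints hαext⟩
  · obtain ⟨hαi0, hαip⟩ := hαbox i (mem_univ i)
    exact ⟨hαi0, hαip.trans (hp1 i)⟩
  · calc residualCost p V α ≤ residualCost p V (β ⊓ p) :=
          hαmin (inf_mem_cappedBudgetSet hp0 (fun i => (hβ i).1) hβc)
      _ = residualCost p V β := residualCost_inf p V β

/-- Lemma 2 ("extreme points" lemma): the minimization of a sum of concave costs of
residual frequencies of pause over the set `{0 ≤ αᵢ ≤ 1, Σαᵢ ≤ c}` has a minimizer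
with at most one coordinate strictly between `0` and `pᵢ`. -/
theorem stmt_0 (n : ℕ) (hn : 0 < n) (p : Fin n → ℝ)
    (hp : ∀ i, 0 < p i ∧ p i ≤ 1) (c : ℝ) (hc : 0 < c)
    (V : Fin n → ℝ → ℝ)
    (hVcont : ∀ i, ContinuousOn (V i) (Set.Icc 0 1))
    (hVmono : ∀ i, MonotoneOn (V i) (Set.Icc 0 1))
    (hVconc : ∀ i, ConcaveOn ℝ (Set.Icc 0 1) (V i))
    (hV0 : ∀ i, V i 0 = 0) :
    ∃ α : Fin n → ℝ,
      ((∀ i, 0 ≤ α i ∧ α i ≤ 1) ∧ ∑ i, α i ≤ c) ∧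
      (∀ β : Fin n → ℝ, (∀ i, 0 ≤ β i ∧ β i ≤ 1) → ∑ i, β i ≤ c →
        ∑ i, V i (max (p i - α i) 0) ≤ ∑ i, V i (max (p i - β i) 0)) ∧
      {i : Fin n | 0 < α i ∧ α i < p i}.ncard ≤ 1 :=
  stmt_0_general n p hp c hc V hVcont hVconc
end

section
/- Let n ≥ 2, fix k ∈ {1,...,n}, let p_1, ..., p_n be reals with 0 < p_i ≤ 1, let V > 0 and c > 0 with Σ_i p_i > c, and let V_k : ℝ → ℝ be concave on [0, p_k]. For a subset S ⊆ {1,...,n} \ {k}, call S feasible if c − p_k ≤ Σ_{i∈S} p_i ≤ c, and define its cost J(S) = V · (Σ_{i∉S, i≠k} p_i) + V_k(p_k + Σ_{i∈S} p_i − c). If the family of feasible subsets is nonempty, then there is a feasible subset S* minimizing J over all feasible subsets such that S* either maximizes Σ_{i∈S} p_i among feasible subsets or minimizes Σ_{i∈S} p_i among feasible subsets. -/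
/-!
For `k ∉ S`, `J S = V (Σ p - p k) + g (Σ_{i ∈ S} p i)` with `g x = V_k (p k - c + x) - V x`, and `g`
is concave on the interval `[c - p k, c]` of feasible subset sums. A concave function on an interval
is bounded below by the smaller of its values at the endpoints, so one of the two feasible sets with
minimal and maximal subset sum minimizes `J`.
-/

open Finset

theorem Finset.exists_extremal_min_image_of_concaveOn {ι : Type*} {F : Finset ι}
    (hF : F.Nonempty) (σ : ι → ℝ) {s : Set ℝ} {g : ℝ → ℝ} (hg : ConcaveOn ℝ s g)
    (hσ : ∀ x ∈ F, σ x ∈ s) :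
    ∃ x ∈ F, (∀ y ∈ F, g (σ x) ≤ g (σ y)) ∧
      ((∀ y ∈ F, σ y ≤ σ x) ∨ (∀ y ∈ F, σ x ≤ σ y)) := by
  obtain ⟨xmax, hxmax, hmax⟩ := F.exists_max_image σ hF
  obtain ⟨xmin, hxmin, hmin⟩ := F.exists_min_image σ hF
  have hmin_le : ∀ y ∈ F, min (g (σ xmin)) (g (σ xmax)) ≤ g (σ y) := fun y hy =>
    hg.min_le_of_mem_Icc (hσ xmin hxmin) (hσ xmax hxmax) ⟨hmin y hy, hmax y hy⟩
  rcases le_total (g (σ xmin)) (g (σ xmax)) with h | h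
  · exact ⟨xmin, hxmin, fun y hy => min_eq_left h ▸ hmin_le y hy, Or.inr hmin⟩
  · exact ⟨xmax, hxmax, fun y hy => min_eq_right h ▸ hmin_le y hy, Or.inl hmax⟩

theorem ConcaveOn.add_affine_comp_translate {s : Set ℝ} {f : ℝ → ℝ} (hf : ConcaveOn ℝ s f)
    (a m : ℝ) : ConcaveOn ℝ ((fun x => a + x) ⁻¹' s) (fun x => f (a + x) + m * x) :=
  (hf.translate_right a).add ((LinearMap.mulLeft ℝ m).concaveOn (hf.1.translate_preimage_right a))

theorem Finset.sum_compl_union_singleton {ι M : Type*} [Fintype ι] [DecidableEq ι]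
    [AddCommGroup M] (f : ι → M) {S : Finset ι} {k : ι} (hk : k ∉ S) :
    ∑ i ∈ univ \ (S ∪ {k}), f i = ∑ i, f i - f k - ∑ i ∈ S, f i := by
  rw [sum_sdiff_eq_sub (subset_univ _), sum_union (disjoint_singleton_right.2 hk),
    sum_singleton]
  abel

theorem stmt_2_general (n : ℕ) (k : Fin n) (p : Fin n → ℝ)
    (V c : ℝ) (Vk : ℝ → ℝ)
    (hVk : ConcaveOn ℝ (Set.Icc 0 (p k)) Vk)
    (feasible : Finset (Fin n) → Prop)
    (hfeasible : ∀ S, feasible S ↔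
      k ∉ S ∧ c - p k ≤ ∑ i ∈ S, p i ∧ ∑ i ∈ S, p i ≤ c)
    (J : Finset (Fin n) → ℝ)
    (hJ : ∀ S, J S =
      V * ∑ i ∈ Finset.univ \ (S ∪ {k}), p i + Vk (p k + ∑ i ∈ S, p i - c))
    (hne : ∃ S, feasible S) :
    ∃ Sstar, feasible Sstar ∧ (∀ S, feasible S → J Sstar ≤ J S) ∧
      ((∀ S, feasible S → ∑ i ∈ S, p i ≤ ∑ i ∈ Sstar, p i) ∨
       (∀ S, feasible S → ∑ i ∈ Sstar, p i ≤ ∑ i ∈ S, p i)) := by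
  classical
  set g : ℝ → ℝ := fun x => Vk (p k - c + x) + (-V) * x
  have hJg : ∀ S, feasible S → J S = V * (∑ i, p i - p k) + g (∑ i ∈ S, p i) := by
    intro S hS
    rw [hJ, sum_compl_union_singleton p ((hfeasible S).1 hS).1]
    simp only [g, show p k - c + ∑ i ∈ S, p i = p k + ∑ i ∈ S, p i - c by ring]
    ring
  have hF : (univ.filter feasible).Nonempty :=
    let ⟨S, hS⟩ := hne; ⟨S, mem_filter.2 ⟨mem_univ S, hS⟩⟩
  obtain ⟨Sstar, hSstar, hmin, hext⟩ := exists_extremal_min_image_of_concaveOn hF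
    (fun S => ∑ i ∈ S, p i) (hVk.add_affine_comp_translate (p k - c) (-V)) (by
      intro S hS
      obtain ⟨-, hlo, hhi⟩ := (hfeasible S).1 (mem_filter.1 hS).2
      constructor <;> linarith)
  simp only [mem_filter, mem_univ, true_and] at hSstar hmin hext
  refine ⟨Sstar, hSstar, fun S hS => ?_, hext⟩
  rw [hJg S hS, hJg Sstar hSstar]
  linarith [hmin S hS]

/-- Lemma 3 (combinatorial content): among feasible subsets `S ⊆ [n] \ {k}`
(those with `c − p_k ≤ Σ_{i∈S} p_i ≤ c`), the cost
`J(S) = V·Σ_{i∉S, i≠k} p_i + V_k(p_k + Σ_{i∈S} p_i − c)` is minimized by a subset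
whose subset-sum `Σ_{i∈S} p_i` is extremal (maximal or minimal) among feasible subsets. -/
theorem stmt_2 (n : ℕ) (hn : 2 ≤ n) (k : Fin n) (p : Fin n → ℝ)
    (hp : ∀ i, 0 < p i ∧ p i ≤ 1) (V c : ℝ) (hV : 0 < V) (hc : 0 < c)
    (hover : c < ∑ i, p i) (Vk : ℝ → ℝ)
    (hVk : ConcaveOn ℝ (Set.Icc 0 (p k)) Vk)
    (feasible : Finset (Fin n) → Prop)
    (hfeasible : ∀ S, feasible S ↔
      k ∉ S ∧ c - p k ≤ ∑ i ∈ S, p i ∧ ∑ i ∈ S, p i ≤ c)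
    (J : Finset (Fin n) → ℝ)
    (hJ : ∀ S, J S =
      V * ∑ i ∈ Finset.univ \ (S ∪ {k}), p i + Vk (p k + ∑ i ∈ S, p i - c))
    (hne : ∃ S, feasible S) :
    ∃ Sstar, feasible Sstar ∧ (∀ S, feasible S → J Sstar ≤ J S) ∧
      ((∀ S, feasible S → ∑ i ∈ S, p i ≤ ∑ i ∈ Sstar, p i) ∨
       (∀ S, feasible S → ∑ i ∈ Sstar, p i ≤ ∑ i ∈ S, p i)) :=
  stmt_2_general n k p V c Vk hVk feasible hfeasible J hJ hne
end

section
/- Let n be a positive integer, let p_1, ..., p_n be reals with 0 < p_i ≤ 1 for each i, let c > 0 with Σ_i p_i > c, and for each i let V_i : ℝ → ℝ be continuous, nondecreasing and concave on [0,1] with V_i(0) = 0. Consider the feasible set D = {α ∈ ℝ^n : 0 ≤ α_i ≤ 1 for all i, and Σ_i α_i ≤ c} and the objective F(α) = Σ_i V_i(max(p_i − α_i, 0)). Let E be the (finite, nonempty) set of α ∈ D such that Σ_i α_i = c, 0 ≤ α_i ≤ p_i for all i, and there exists k with α_i ∈ {0, p_i} for every i ≠ k. Then the infimum of F over D equals the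 minimum of F over E. -/
/-!
If an allocation `α` in the box `0 ≤ α ≤ p` has two fractional coordinates `i ≠ j`, moving mass
between them keeps the total, and the largest moves in either direction lead to two allocations
in the box, each with one fractional coordinate fewer, between which `α` lies on a segment. The
cost `α ↦ ∑ᵢ Vᵢ(pᵢ - αᵢ)` is concave on the box, so it is no larger at one of these endpoints.
Iterating this exchange, every allocation of total `c` is dominated by an extreme one. A general
feasible `β` is first truncated at `p` (which does not change its cost) and then raised to total
`c` (which does not increase it, the `Vᵢ` being nondecreasing). The extreme allocations form a
finite set, so the cost attains its minimum on it.
-/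

open Finset

variable {ι : Type*}

lemma mem_Icc_zero_iff {p α : ι → ℝ} : α ∈ Set.Icc 0 p ↔ ∀ i, 0 ≤ α i ∧ α i ≤ p i := by
  simp only [Set.mem_Icc, Pi.le_def, Pi.zero_apply, forall_and]

lemma eq_of_sum_eq_of_forall_ne {M : Type*} [Fintype ι] [AddCommGroup M] {f g : ι → M} {k : ι}
    (h : ∀ i, i ≠ k → f i = g i) (hsum : ∑ i, f i = ∑ i, g i) : f = g := by
  have hk : ∑ i, (f i - g i) = f k - g k :=
    sum_eq_single k (fun i _ hi => sub_eq_zero.2 (h i hi)) (by simp)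
  rw [sum_sub_distrib, hsum, sub_self, eq_comm, sub_eq_zero] at hk
  funext i
  rcases eq_or_ne i k with rfl | hi
  · exact hk
  · exact h i hi

lemma exists_mem_Icc_le_sum_eq [Fintype ι] {p γ : ι → ℝ} {c : ℝ} (hγ : γ ∈ Set.Icc 0 p)
    (hγc : ∑ i, γ i ≤ c) (hcp : c ≤ ∑ i, p i) :
    ∃ δ ∈ Set.Icc 0 p, γ ≤ δ ∧ ∑ i, δ i = c := by
  set t := (c - ∑ i, γ i) / (∑ i, p i - ∑ i, γ i)
  have ht0 : 0 ≤ t := div_nonneg (by linarith) (by linarith)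
  have ht1 : t ≤ 1 := div_le_one_of_le₀ (by linarith) (by linarith)
  have hγp := mem_Icc_zero_iff.1 hγ
  refine ⟨γ + t • (p - γ), mem_Icc_zero_iff.2 fun i => ?_, fun i => ?_, ?_⟩
  · simp only [Pi.add_apply, Pi.smul_apply, Pi.sub_apply, smul_eq_mul]
    constructor <;> nlinarith [hγp i]
  · simp only [Pi.add_apply, Pi.smul_apply, Pi.sub_apply, smul_eq_mul]
    nlinarith [hγp i]
  · simp only [Pi.add_apply, Pi.smul_apply, Pi.sub_apply, smul_eq_mul, sum_add_distrib,
      ← mul_sum, sum_sub_distrib]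
    rw [div_mul_cancel_of_imp fun h => by linarith]
    ring

section Transfer

variable [DecidableEq ι]

def transfer (α : ι → ℝ) (i j : ι) (t : ℝ) : ι → ℝ := α + t • (Pi.single i 1 - Pi.single j 1)

variable {α : ι → ℝ} {i j : ι} {t : ℝ}

lemma transfer_apply_left (hij : i ≠ j) : transfer α i j t i = α i + t := by
  simp [transfer, hij]

lemma transfer_apply_right (hij : i ≠ j) : transfer α i j t j = α j - t := by
  simp [transfer, hij.symm, sub_eq_add_neg]

lemma transfer_apply_of_ne {m : ι} (hi : m ≠ i) (hj : m ≠ j) : transfer α i j t m = α m := by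
  simp [transfer, hi, hj]

lemma sum_transfer [Fintype ι] : ∑ m, transfer α i j t m = ∑ m, α m := by
  simp [transfer, sum_add_distrib, ← mul_sum]

lemma transfer_mem_Icc {p : ι → ℝ} (hα : α ∈ Set.Icc 0 p) (hij : i ≠ j) (ht : 0 ≤ t)
    (hti : t ≤ p i - α i) (htj : t ≤ α j) : transfer α i j t ∈ Set.Icc 0 p := by
  rw [mem_Icc_zero_iff] at hα ⊢
  intro m
  rcases eq_or_ne m i with rfl | hmi
  · rw [transfer_apply_left hij]; constructor <;> linarith [hα m]
  rcases eq_or_ne m j with rfl | hmj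
  · rw [transfer_apply_right hij]; constructor <;> linarith [hα m]
  rw [transfer_apply_of_ne hmi hmj]; exact hα m

lemma mem_segment_transfer {s r : ℝ} (hs : 0 ≤ s) (hr : 0 ≤ r) (hsr : 0 < s + r) :
    α ∈ segment ℝ (transfer α i j s) (transfer α j i r) := by
  have hback : transfer α j i r = α - r • (Pi.single i 1 - Pi.single j 1) := by
    rw [transfer, ← neg_sub, smul_neg, ← sub_eq_add_neg]
  refine ⟨r / (s + r), s / (s + r), by positivity, by positivity, ?_, ?_⟩
  · rw [← add_div, add_comm r s, div_self hsr.ne']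
  rw [hback, transfer]
  match_scalars <;> field_simp <;> ring

end Transfer

section Cost

variable [Fintype ι] {V : ι → ℝ → ℝ} {p α : ι → ℝ}

def shortfallCost (V : ι → ℝ → ℝ) (p α : ι → ℝ) : ℝ := ∑ i, V i (max (p i - α i) 0)

lemma shortfallCost_inf (β : ι → ℝ) : shortfallCost V p (β ⊓ p) = shortfallCost V p β := by
  refine sum_congr rfl fun i _ => ?_
  rw [Pi.inf_apply, ← max_sub_sub_left, sub_self, max_assoc, max_self]

lemma shortfallCost_le_of_le {β : ι → ℝ} (hp : ∀ i, p i ≤ 1)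
    (hV : ∀ i, MonotoneOn (V i) (Set.Icc 0 1)) (hα : α ∈ Set.Icc 0 p) (hαβ : α ≤ β)
    (hβ : β ∈ Set.Icc 0 p) : shortfallCost V p β ≤ shortfallCost V p α := by
  rw [mem_Icc_zero_iff] at hα hβ
  refine sum_le_sum fun i _ => ?_
  rw [max_eq_left (sub_nonneg.2 (hα i).2), max_eq_left (sub_nonneg.2 (hβ i).2)]
  refine hV i ⟨?_, ?_⟩ ⟨?_, ?_⟩ (by linarith [hαβ i]) <;> linarith [hα i, hβ i, hp i]

lemma concaveOn_shortfallCost (hp : ∀ i, p i ≤ 1) (hV : ∀ i, ConcaveOn ℝ (Set.Icc 0 1) (V i)) :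
    ConcaveOn ℝ (Set.Icc 0 p) (shortfallCost V p) := by
  have hmem : ∀ α ∈ Set.Icc 0 p, ∀ i,
      max (p i - α i) 0 = p i - α i ∧ p i - α i ∈ Set.Icc 0 1 := by
    intro α hα i
    have := mem_Icc_zero_iff.1 hα i
    exact ⟨max_eq_left (by linarith), by linarith, by linarith [hp i]⟩
  refine ⟨convex_Icc 0 p, fun x hx y hy a b ha hb hab => ?_⟩
  have hz := convex_Icc 0 p hx hy ha hb hab
  simp only [shortfallCost, smul_eq_mul, mul_sum, ← sum_add_distrib]
  refine sum_le_sum fun i _ => ?_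
  rw [(hmem x hx i).1, (hmem y hy i).1, (hmem _ hz i).1]
  have harg : a * (p i - x i) + b * (p i - y i) = p i - (a • x + b • y) i := by
    simp only [Pi.add_apply, Pi.smul_apply, smul_eq_mul]
    linear_combination p i * hab
  simpa only [harg, smul_eq_mul] using (hV i).2 (hmem x hx i).2 (hmem y hy i).2 ha hb hab

open Classical in
noncomputable def fractionalCoords (p α : ι → ℝ) : Finset ι := {i | α i ≠ 0 ∧ α i ≠ p i}

lemma mem_fractionalCoords {i : ι} : i ∈ fractionalCoords p α ↔ α i ≠ 0 ∧ α i ≠ p i := by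
  simp [fractionalCoords]

lemma lt_of_mem_fractionalCoords {i : ι} (hα : α ∈ Set.Icc 0 p) (hi : i ∈ fractionalCoords p α) :
    0 < α i ∧ α i < p i := by
  obtain ⟨h0, hp⟩ := mem_fractionalCoords.1 hi
  obtain ⟨h0', hp'⟩ := mem_Icc_zero_iff.1 hα i
  exact ⟨lt_of_le_of_ne h0' (Ne.symm h0), lt_of_le_of_ne hp' hp⟩

variable [DecidableEq ι] {i j : ι}

lemma fractionalCoords_transfer_ssubset (hij : i ≠ j) (hi : i ∈ fractionalCoords p α)
    (hj : j ∈ fractionalCoords p α) :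
    fractionalCoords p (transfer α i j (min (p i - α i) (α j))) ⊂ fractionalCoords p α := by
  rw [ssubset_iff_of_subset]
  · rcases le_total (p i - α i) (α j) with h | h
    · refine ⟨i, hi, fun hi' => (mem_fractionalCoords.1 hi').2 ?_⟩
      rw [transfer_apply_left hij, min_eq_left h]; ring
    · refine ⟨j, hj, fun hj' => (mem_fractionalCoords.1 hj').1 ?_⟩
      rw [transfer_apply_right hij, min_eq_right h]; ring
  · intro m hm
    rcases eq_or_ne m i with rfl | hmi
    · exact hi
    rcases eq_or_ne m j with rfl | hmj
    · exact hj
    rwa [mem_fractionalCoords, transfer_apply_of_ne hmi hmj, ← mem_fractionalCoords] at hm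

lemma exists_shortfallCost_le_of_two_fractional (hp : ∀ i, p i ≤ 1)
    (hV : ∀ i, ConcaveOn ℝ (Set.Icc 0 1) (V i)) (hα : α ∈ Set.Icc 0 p) (hij : i ≠ j)
    (hi : i ∈ fractionalCoords p α) (hj : j ∈ fractionalCoords p α) :
    ∃ α' ∈ Set.Icc 0 p, ∑ m, α' m = ∑ m, α m ∧ shortfallCost V p α' ≤ shortfallCost V p α ∧
      fractionalCoords p α' ⊂ fractionalCoords p α := by
  have hstep : ∀ {i j}, i ∈ fractionalCoords p α → j ∈ fractionalCoords p α →
      0 < min (p i - α i) (α j) := fun hi hj =>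
    lt_min (sub_pos.2 (lt_of_mem_fractionalCoords hα hi).2) (lt_of_mem_fractionalCoords hα hj).1
  set a := transfer α i j (min (p i - α i) (α j))
  set b := transfer α j i (min (p j - α j) (α i))
  have ha : a ∈ Set.Icc 0 p :=
    transfer_mem_Icc hα hij (hstep hi hj).le (min_le_left _ _) (min_le_right _ _)
  have hb : b ∈ Set.Icc 0 p :=
    transfer_mem_Icc hα hij.symm (hstep hj hi).le (min_le_left _ _) (min_le_right _ _)
  have hmin := (concaveOn_shortfallCost hp hV).min_le_of_mem_segment ha hb
    (mem_segment_transfer (hstep hi hj).le (hstep hj hi).le (add_pos (hstep hi hj) (hstep hj hi)))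
  rcases min_choice (shortfallCost V p a) (shortfallCost V p b) with h | h
  · exact ⟨a, ha, sum_transfer, h ▸ hmin, fractionalCoords_transfer_ssubset hij hi hj⟩
  · exact ⟨b, hb, sum_transfer, h ▸ hmin, fractionalCoords_transfer_ssubset hij.symm hj hi⟩

lemma exists_shortfallCost_le_card_fractionalCoords_le_one (hp : ∀ i, p i ≤ 1)
    (hV : ∀ i, ConcaveOn ℝ (Set.Icc 0 1) (V i)) (hα : α ∈ Set.Icc 0 p) :
    ∃ α' ∈ Set.Icc 0 p, ∑ m, α' m = ∑ m, α m ∧ shortfallCost V p α' ≤ shortfallCost V p α ∧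
      #(fractionalCoords p α') ≤ 1 := by
  induction hN : #(fractionalCoords p α) using Nat.strong_induction_on generalizing α with
  | _ N ih =>
  by_cases h1 : N ≤ 1
  · exact ⟨α, hα, rfl, le_rfl, hN ▸ h1⟩
  obtain ⟨i, hi, j, hj, hij⟩ := one_lt_card.1 (by omega : 1 < #(fractionalCoords p α))
  obtain ⟨β, hβ, hsum, hcost, hss⟩ :=
    exists_shortfallCost_le_of_two_fractional hp hV hα hij hi hj
  obtain ⟨γ, hγ, hsum', hcost', hcard⟩ := ih _ (hN ▸ card_lt_card hss) hβ rfl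
  exact ⟨γ, hγ, hsum'.trans hsum, hcost'.trans hcost, hcard⟩

end Cost

section Extreme

variable [Fintype ι] {p : ι → ℝ} {c : ℝ}

/-- The set `E` of the paper. -/
def extremeAllocations (p : ι → ℝ) (c : ℝ) : Set (ι → ℝ) :=
  {α | ∑ i, α i = c ∧ (∀ i, 0 ≤ α i ∧ α i ≤ p i) ∧ ∃ k, ∀ i, i ≠ k → α i = 0 ∨ α i = p i}

open Classical in
/-- An extreme allocation is determined by its zero and its full coordinates: the remaining
coordinate is fixed by the total. -/
lemma extremeAllocations_finite (p : ι → ℝ) (c : ℝ) : (extremeAllocations p c).Finite := by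
  refine Set.Finite.of_finite_image
    (f := fun α => (({i | α i = 0} : Finset ι), ({i | α i = p i} : Finset ι)))
    (Set.toFinite _) ?_
  rintro α ⟨hsum, -, k, hk⟩ β ⟨hsum', -, -⟩ hαβ
  simp only [Prod.mk.injEq, Finset.ext_iff, mem_filter, mem_univ, true_and] at hαβ
  refine eq_of_sum_eq_of_forall_ne (k := k) (fun i hi => ?_) (hsum.trans hsum'.symm)
  rcases hk i hi with h | h
  · rw [h, (hαβ.1 i).1 h]
  · rw [h, (hαβ.2 i).1 h]

lemma mem_extremeAllocations_of_card_le_one [Nonempty ι] {α : ι → ℝ} (hα : α ∈ Set.Icc 0 p)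
    (hsum : ∑ i, α i = c) (hcard : #(fractionalCoords p α) ≤ 1) : α ∈ extremeAllocations p c := by
  obtain ⟨k, hk⟩ := card_le_one_iff_subset_singleton.1 hcard
  refine ⟨hsum, mem_Icc_zero_iff.1 hα, k, fun i hik => ?_⟩
  by_contra h
  exact hik (mem_singleton.1 (hk (mem_fractionalCoords.2 (not_or.1 h))))

variable [DecidableEq ι] [Nonempty ι] {V : ι → ℝ → ℝ}

lemma exists_mem_extremeAllocations_shortfallCost_le {β : ι → ℝ}
    (hp : ∀ i, 0 ≤ p i ∧ p i ≤ 1) (hcp : c ≤ ∑ i, p i)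
    (hVmono : ∀ i, MonotoneOn (V i) (Set.Icc 0 1))
    (hVconc : ∀ i, ConcaveOn ℝ (Set.Icc 0 1) (V i)) (hβ : ∀ i, 0 ≤ β i) (hβc : ∑ i, β i ≤ c) :
    ∃ α ∈ extremeAllocations p c, shortfallCost V p α ≤ shortfallCost V p β := by
  have hp1 : ∀ i, p i ≤ 1 := fun i => (hp i).2
  have hγ : β ⊓ p ∈ Set.Icc 0 p :=
    mem_Icc_zero_iff.2 fun i => ⟨le_min (hβ i) (hp i).1, min_le_right _ _⟩
  have hγc : ∑ i, (β ⊓ p) i ≤ c := (sum_le_sum fun i _ => min_le_left _ _).trans hβc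
  obtain ⟨δ, hδ, hγδ, hδc⟩ := exists_mem_Icc_le_sum_eq hγ hγc hcp
  obtain ⟨α, hα, hαδ, hcost, hcard⟩ :=
    exists_shortfallCost_le_card_fractionalCoords_le_one hp1 hVconc hδ
  refine ⟨α, mem_extremeAllocations_of_card_le_one hα (hαδ.trans hδc) hcard, ?_⟩
  calc shortfallCost V p α ≤ shortfallCost V p δ := hcost
    _ ≤ shortfallCost V p (β ⊓ p) := shortfallCost_le_of_le hp1 hVmono hγ hγδ hδ
    _ = shortfallCost V p β := shortfallCost_inf β

end Extreme

theorem stmt_3_general (n : ℕ) (hn : 0 < n) (p : Fin n → ℝ)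
    (hp : ∀ i, 0 < p i ∧ p i ≤ 1) (c : ℝ) (hc : 0 < c)
    (hover : c < ∑ i, p i)
    (V : Fin n → ℝ → ℝ)
    (hVmono : ∀ i, MonotoneOn (V i) (Set.Icc 0 1))
    (hVconc : ∀ i, ConcaveOn ℝ (Set.Icc 0 1) (V i)) :
    ∃ α : Fin n → ℝ,
      (∑ i, α i = c ∧ (∀ i, 0 ≤ α i ∧ α i ≤ p i) ∧
        ∃ k : Fin n, ∀ i, i ≠ k → α i = 0 ∨ α i = p i) ∧
      (∀ β : Fin n → ℝ, (∀ i, 0 ≤ β i ∧ β i ≤ 1) → ∑ i, β i ≤ c →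
        ∑ i, V i (max (p i - α i) 0) ≤ ∑ i, V i (max (p i - β i) 0)) := by
  have : Nonempty (Fin n) := ⟨⟨0, hn⟩⟩
  have hdom : ∀ β : Fin n → ℝ, (∀ i, 0 ≤ β i) → ∑ i, β i ≤ c →
      ∃ α ∈ extremeAllocations p c, shortfallCost V p α ≤ shortfallCost V p β :=
    fun β => exists_mem_extremeAllocations_shortfallCost_le
      (fun i => ⟨(hp i).1.le, (hp i).2⟩) hover.le hVmono hVconc
  obtain ⟨α₀, hα₀, -⟩ := hdom 0 (fun _ => le_rfl) (by simpa using hc.le)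
  obtain ⟨α, hα, hmin⟩ :=
    Set.exists_min_image _ (shortfallCost V p) (extremeAllocations_finite p c) ⟨α₀, hα₀⟩
  refine ⟨α, hα, fun β hβ hβc => ?_⟩
  obtain ⟨α', hα', hle⟩ := hdom β (fun i => (hβ i).1) hβc
  exact (hmin α' hα').trans hle

/-- Theorem 2 (mathematical core, overloaded case `Σᵢ pᵢ > c`): the infimum of the
continuous non-convex problem over `D = {0 ≤ αᵢ ≤ 1, Σαᵢ ≤ c}` is attained at a point
of the finite set `E` of extreme allocations, where the resource constraint is tight
and at most one user receives a fractional rate. -/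
theorem stmt_3 (n : ℕ) (hn : 0 < n) (p : Fin n → ℝ)
    (hp : ∀ i, 0 < p i ∧ p i ≤ 1) (c : ℝ) (hc : 0 < c)
    (hover : c < ∑ i, p i)
    (V : Fin n → ℝ → ℝ)
    (hVcont : ∀ i, ContinuousOn (V i) (Set.Icc 0 1))
    (hVmono : ∀ i, MonotoneOn (V i) (Set.Icc 0 1))
    (hVconc : ∀ i, ConcaveOn ℝ (Set.Icc 0 1) (V i))
    (hV0 : ∀ i, V i 0 = 0) :
    ∃ α : Fin n → ℝ,
      (∑ i, α i = c ∧ (∀ i, 0 ≤ α i ∧ α i ≤ p i) ∧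
        ∃ k : Fin n, ∀ i, i ≠ k → α i = 0 ∨ α i = p i) ∧
      (∀ β : Fin n → ℝ, (∀ i, 0 ≤ β i ∧ β i ≤ 1) → ∑ i, β i ≤ c →
        ∑ i, V i (max (p i - α i) 0) ≤ ∑ i, V i (max (p i - β i) 0)) :=
  stmt_3_general n hn p hp c hc hover V hVmono hVconc
end

section
/- Let h̄ ∈ (0,1], set δ = √(1 − h̄) and θ = 2/(1 + δ), so θ > 1. Then there exists M (depending only on h̄) such that for every m ≥ M the following holds. Let n be any positive integer, let (X_{u,c})_{u ∈ {1,...,n}, c ∈ {1,...,m}} be a family of mutually independent {0,1}-valued random variables with P(X_{u,c} = 1) = h̄_{u,c} ≥ h̄ for all u, c, and let s : {1,...,m} → {1,...,n} be any map such that each user u has at most two preimages, i.e. |s^{-1}(u)| ≤ 2 for all u. Consider the bipartite graph G with left vertex set {1,...,m} (slots), right vertex set {1,...,m} (channels), and an edge between slot j and channel c if and only if X_{s(j),c} = 1. Then the probability that G has no perfect matching (i.e., that there is no bijection g : {1,...,m} → {1,...,m} with X_{s(j),g(j)} = 1 for all j) is at most θ^{−m}. -/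
open MeasureTheory ProbabilityTheory

/-!
If the slot–channel graph has no perfect matching, Hall's theorem gives a set `S` of `k` slots
whose edges all go into a set `T` of `k - 1` channels: every user of `S` is OFF on the
`b = m - k + 1` channels outside `T`. Each user fills at most two slots, so `S` involves at least
`k / 2` users and, by independence, this event has probability at most
`(1 - h̄) ^ (k b / 2) ≤ ρ ^ (min k b * m)` with `ρ = (1 - h̄) ^ (1/4)`, since `min k b * m ≤ 2 k b`.
There are at most `m ^ (2 * min k b)` such pairs `(S, T)`, so the union bound over `k` gives
`m³ ρ ^ m`, which is eventually below `θ⁻ᵐ` because `ρ = √δ < (1 + δ) / 2 = θ⁻¹`.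
-/

open Finset

def hallPairs (α β : Type*) [Fintype α] [Fintype β] : Finset (Finset α × Finset β) :=
  {p | #p.2 + 1 = #p.1}

theorem exists_mem_hallPairs_of_not_exists_equiv {α β : Type*} [Fintype α] [Fintype β]
    (hcard : Fintype.card α = Fintype.card β) (R : α → β → Prop)
    (h : ¬ ∃ g : α ≃ β, ∀ a, R a (g a)) :
    ∃ p ∈ hallPairs α β, ∀ a ∈ p.1, ∀ b ∉ p.2, ¬ R a b := by
  classical
  let t : α → Finset β := fun a => {b | R a b}
  obtain ⟨S, hS⟩ : ∃ S : Finset α, #(S.biUnion t) < #S := by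
    by_contra! hall
    obtain ⟨f, hf, hft⟩ := (all_card_le_biUnion_card_iff_exists_injective t).mp hall
    exact h ⟨.ofBijective f ((Fintype.bijective_iff_injective_and_card f).mpr ⟨hf, hcard⟩),
      fun a => by simpa [t] using hft a⟩
  obtain ⟨T, hST, -, hT⟩ := exists_subsuperset_card_eq (subset_univ (S.biUnion t))
    (Nat.le_sub_one_of_lt hS) (by simpa [← hcard] using (Nat.sub_le _ 1).trans (card_le_univ S))
  refine ⟨(S, T), by simp [hallPairs]; omega, fun a ha b hb hab => hb (hST ?_)⟩
  exact mem_biUnion.mpr ⟨a, ha, by simpa [t] using hab⟩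

theorem measure_biInter_preimage_compl_le {ι Ω β : Type*} [MeasurableSpace Ω]
    [MeasurableSpace β] {μ : Measure Ω} [IsProbabilityMeasure μ] {X : ι → Ω → β}
    (hX : iIndepFun X μ) (hmeas : ∀ i, Measurable (X i)) {A : Set β} (hA : MeasurableSet A)
    {a : ENNReal} (ha : ∀ i, a ≤ μ (X i ⁻¹' A)) (I : Finset ι) :
    μ (⋂ i ∈ I, X i ⁻¹' Aᶜ) ≤ (1 - a) ^ #I := by
  rw [hX.measure_inter_preimage_eq_mul I (fun _ _ => hA.compl)]
  refine prod_le_pow_card _ _ _ fun i _ => ?_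
  rw [Set.preimage_compl, prob_compl_eq_one_sub (hmeas i hA)]
  exact tsub_le_tsub_left (ha i) 1

theorem measure_not_exists_equiv_le {ι α β Ω : Type*} [DecidableEq ι] [Fintype α] [Fintype β]
    (hcard : Fintype.card α = Fintype.card β) [MeasurableSpace Ω] {μ : Measure Ω}
    [IsProbabilityMeasure μ] {X : ι × β → Ω → ℝ} (hX : iIndepFun X μ)
    (hmeas : ∀ q, Measurable (X q)) {a : ENNReal} (ha : ∀ q, a ≤ μ {ω | X q ω = 1})
    (s : α → ι) :
    μ {ω | ¬ ∃ g : α ≃ β, ∀ j, X (s j, g j) ω = 1} ≤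
      ∑ p ∈ hallPairs α β, (1 - a) ^ (#(p.1.image s) * (Fintype.card β - #p.2)) := by
  classical
  have hcover : {ω | ¬ ∃ g : α ≃ β, ∀ j, X (s j, g j) ω = 1} ⊆
      ⋃ p ∈ hallPairs α β, ⋂ q ∈ p.1.image s ×ˢ p.2ᶜ, X q ⁻¹' {1}ᶜ := by
    intro ω hω
    obtain ⟨p, hp, hR⟩ :=
      exists_mem_hallPairs_of_not_exists_equiv hcard (fun j c => X (s j, c) ω = 1) hω
    simp only [Set.mem_iUnion, Set.mem_iInter]
    refine ⟨p, hp, fun q hq => ?_⟩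
    obtain ⟨hu, hc⟩ := mem_product.mp hq
    obtain ⟨j, hj, hju⟩ := mem_image.mp hu
    exact fun h => hR j hj q.2 (mem_compl.mp hc) (by rwa [hju])
  refine (measure_mono hcover).trans ((measure_biUnion_finset_le _ _).trans
    (sum_le_sum fun p _ => ?_))
  rw [← card_compl, ← card_product]
  exact measure_biInter_preimage_compl_le hX hmeas (measurableSet_singleton 1) ha _

theorem Nat.choose_le_pow_min {m k : ℕ} (hk : k ≤ m) : m.choose k ≤ m ^ min k (m - k) := by
  rcases le_total k (m - k) with h | h
  · rw [min_eq_left h]; exact choose_le_pow m k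
  · rw [min_eq_right h, ← choose_symm hk]; exact choose_le_pow m (m - k)

theorem Nat.choose_mul_choose_sub_one_le {m k : ℕ} (hk : 1 ≤ k) (hkm : k ≤ m) :
    m.choose k * m.choose (k - 1) ≤ m ^ (2 * min k (m + 1 - k)) := by
  have hm : 1 ≤ m := hk.trans hkm
  rw [two_mul, pow_add]
  gcongr
  · exact (choose_le_pow_min hkm).trans (Nat.pow_le_pow_right hm (by omega))
  · exact (choose_le_pow_min (by omega)).trans (Nat.pow_le_pow_right hm (by omega))

theorem Nat.min_mul_le_two_mul_mul {k b m : ℕ} (h : k + b = m + 1) :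
    min k b * m ≤ 2 * (k * b) := by
  rcases le_total k b with h' | h'
  · rw [min_eq_left h']; nlinarith
  · rw [min_eq_right h']; nlinarith

theorem card_filter_hallPairs_le (m k : ℕ) :
    #{p ∈ hallPairs (Fin m) (Fin m) | #p.1 = k} ≤ m.choose k * m.choose (k - 1) := by
  calc #{p ∈ hallPairs (Fin m) (Fin m) | #p.1 = k}
      ≤ #(powersetCard k univ ×ˢ powersetCard (k - 1) univ) := by
        refine card_le_card fun p hp => ?_
        simp only [hallPairs, mem_filter, mem_univ, true_and] at hp
        simp only [mem_product, mem_powersetCard, subset_univ, true_and]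
        omega
    _ = m.choose k * m.choose (k - 1) := by simp

theorem sum_hallPairs_pow_le {m : ℕ} {ρ : ℝ} (hρ : 0 ≤ ρ) (h : (m : ℝ) ^ 2 * ρ ^ m ≤ 1) :
    ∑ p ∈ hallPairs (Fin m) (Fin m), ρ ^ (min #p.1 (m - #p.2) * m) ≤ m ^ 3 * ρ ^ m := by
  have hk : ∀ p ∈ hallPairs (Fin m) (Fin m), #p.1 ∈ Icc 1 m := fun p hp => by
    simp only [hallPairs, mem_filter, mem_univ, true_and] at hp
    exact mem_Icc.mpr ⟨by omega, (card_le_univ p.1).trans_eq (Fintype.card_fin m)⟩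
  rw [← sum_fiberwise_of_maps_to hk]
  calc ∑ k ∈ Icc 1 m, ∑ p ∈ hallPairs (Fin m) (Fin m) with #p.1 = k,
        ρ ^ (min #p.1 (m - #p.2) * m)
      ≤ ∑ k ∈ Icc 1 m, (m : ℝ) ^ 2 * ρ ^ m := sum_le_sum fun k hk => ?_
    _ = m ^ 3 * ρ ^ m := by simp; ring
  obtain ⟨hk1, hkm⟩ := mem_Icc.mp hk
  set a := min k (m + 1 - k)
  have hterm : ∀ p ∈ {p ∈ hallPairs (Fin m) (Fin m) | #p.1 = k},
      ρ ^ (min #p.1 (m - #p.2) * m) = ρ ^ (a * m) := fun p hp => by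
    simp only [hallPairs, mem_filter, mem_univ, true_and] at hp
    congr 3 <;> omega
  have hcard : (#{p ∈ hallPairs (Fin m) (Fin m) | #p.1 = k} : ℝ) ≤ (m : ℝ) ^ (2 * a) := by
    exact_mod_cast (card_filter_hallPairs_le m k).trans (Nat.choose_mul_choose_sub_one_le hk1 hkm)
  calc ∑ p ∈ hallPairs (Fin m) (Fin m) with #p.1 = k, ρ ^ (min #p.1 (m - #p.2) * m)
      = #{p ∈ hallPairs (Fin m) (Fin m) | #p.1 = k} * ρ ^ (a * m) := by
        rw [sum_congr rfl hterm, sum_const, nsmul_eq_mul]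
    _ ≤ (m : ℝ) ^ (2 * a) * ρ ^ (a * m) := by gcongr
    _ = ((m : ℝ) ^ 2 * ρ ^ m) ^ a := by ring
    _ ≤ (m : ℝ) ^ 2 * ρ ^ m := pow_le_of_le_one (by positivity) h (by omega)

theorem pow_card_image_mul_le {α β : Type*} [DecidableEq β] {ρ : ℝ} (hρ : 0 ≤ ρ) (hρ1 : ρ ≤ 1)
    {S : Finset α} {s : α → β} (hs : ∀ u, #{j ∈ S | s j = u} ≤ 2) {t m : ℕ}
    (ht : t + 1 = #S) (htm : t ≤ m) :
    (ρ ^ 4) ^ (#(S.image s) * (m - t)) ≤ ρ ^ (min #S (m - t) * m) := by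
  have hS : #S ≤ 2 * #(S.image s) := card_le_mul_card_image S 2 fun u _ => hs u
  rw [← pow_mul]
  refine pow_le_pow_of_le_one hρ hρ1 ?_
  calc min #S (m - t) * m ≤ 2 * (#S * (m - t)) := Nat.min_mul_le_two_mul_mul (by omega)
    _ ≤ 2 * (2 * #(S.image s) * (m - t)) := by gcongr
    _ = 4 * (#(S.image s) * (m - t)) := by ring

theorem card_filter_le_ncard_setOf {α : Type*} [Finite α] (S : Finset α) (P : α → Prop)
    [DecidablePred P] :
    #{j ∈ S | P j} ≤ {j | P j}.ncard := by
  rw [← Set.ncard_coe_finset]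
  exact Set.ncard_le_ncard (fun j hj => (mem_filter.mp hj).2)

theorem sum_hallPairs_one_sub_pow_le {ι : Type*} [DecidableEq ι] {m : ℕ} {h ρ : ℝ} (hh : 0 ≤ h)
    (hρ : 0 ≤ ρ) (hρ4 : ρ ^ 4 = 1 - h) (hm : (m : ℝ) ^ 2 * ρ ^ m ≤ 1) {s : Fin m → ι}
    (hs : ∀ u, {j | s j = u}.ncard ≤ 2) :
    ∑ p ∈ hallPairs (Fin m) (Fin m), (1 - ENNReal.ofReal h) ^ (#(p.1.image s) * (m - #p.2)) ≤
      ENNReal.ofReal (m ^ 3 * ρ ^ m) := by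
  have hρ1 : ρ ≤ 1 := (pow_le_one_iff_of_nonneg hρ four_ne_zero).mp (by linarith)
  calc ∑ p ∈ hallPairs (Fin m) (Fin m), (1 - ENNReal.ofReal h) ^ (#(p.1.image s) * (m - #p.2))
      ≤ ∑ p ∈ hallPairs (Fin m) (Fin m), ENNReal.ofReal (ρ ^ (min #p.1 (m - #p.2) * m)) := by
        refine sum_le_sum fun p hp => ?_
        rw [← ENNReal.ofReal_one, ← ENNReal.ofReal_sub _ hh, ← hρ4,
          ← ENNReal.ofReal_pow (by positivity)]
        exact ENNReal.ofReal_le_ofReal (pow_card_image_mul_le hρ hρ1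
          (fun u => (card_filter_le_ncard_setOf _ _).trans (hs u)) (mem_filter.mp hp).2
          ((card_le_univ p.2).trans_eq (Fintype.card_fin m)))
    _ = ENNReal.ofReal (∑ p ∈ hallPairs (Fin m) (Fin m), ρ ^ (min #p.1 (m - #p.2) * m)) :=
        (ENNReal.ofReal_sum_of_nonneg fun _ _ => by positivity).symm
    _ ≤ ENNReal.ofReal (m ^ 3 * ρ ^ m) := ENNReal.ofReal_le_ofReal (sum_hallPairs_pow_le hρ hm)

theorem eventually_pow_mul_pow_le (k : ℕ) {ρ r : ℝ} (hρ : 0 ≤ ρ) (hρr : ρ < r) :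
    ∀ᶠ m : ℕ in Filter.atTop, (m : ℝ) ^ k * ρ ^ m ≤ r ^ m := by
  have hr : 0 < r := hρ.trans_lt hρr
  filter_upwards [(tendsto_pow_const_mul_const_pow_of_lt_one k (div_nonneg hρ hr.le)
    ((div_lt_one hr).mpr hρr)).eventually_le_const one_pos] with m hm
  rwa [div_pow, mul_div_assoc', div_le_one (pow_pos hr m)] at hm

theorem Real.sqrt_lt_one_add_div_two {δ : ℝ} (hδ : 0 ≤ δ) (h1 : δ ≠ 1) :
    √δ < (1 + δ) / 2 := by
  have hne : √δ ≠ 1 := fun h => h1 (by simpa [h] using (Real.sq_sqrt hδ).symm)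
  nlinarith [Real.sq_sqrt hδ, sq_pos_of_ne_zero (sub_ne_zero.mpr hne)]

/-- Lemma 6: with independent ON/OFF channel states, each ON with probability at least
`h̄`, and a list of `m` slots referring to users with no user repeated more than twice,
the bipartite slot–channel graph fails to have a perfect matching with probability at
most `θ^{-m}` where `θ = 2/(1+√(1−h̄)) > 1`, for all sufficiently large `m`. -/
theorem stmt_4 (hbar : ℝ) (hhbar : hbar ∈ Set.Ioc (0 : ℝ) 1) :
    1 < 2 / (1 + Real.sqrt (1 - hbar)) ∧
    ∃ M : ℕ, ∀ m : ℕ, M ≤ m → ∀ n : ℕ, 0 < n →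
      ∀ (Ω : Type) (_ : MeasurableSpace Ω) (μ : Measure Ω), IsProbabilityMeasure μ →
      ∀ X : Fin n × Fin m → Ω → ℝ,
        iIndepFun X μ →
        (∀ u c, Measurable (X (u, c))) →
        (∀ u c ω, X (u, c) ω = 0 ∨ X (u, c) ω = 1) →
        (∀ u c, ENNReal.ofReal hbar ≤ μ {ω | X (u, c) ω = 1}) →
      ∀ s : Fin m → Fin n,
        (∀ u : Fin n, {j : Fin m | s j = u}.ncard ≤ 2) →
        μ {ω | ¬ ∃ g : Fin m ≃ Fin m, ∀ j, X (s j, g j) ω = 1} ≤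
          ENNReal.ofReal ((2 / (1 + Real.sqrt (1 - hbar)))⁻¹ ^ m) := by
  obtain ⟨hb0, hb1⟩ := hhbar
  set δ := √(1 - hbar)
  have hδ0 : 0 ≤ δ := Real.sqrt_nonneg _
  have hδ1 : δ < 1 := (Real.sqrt_lt' one_pos).mpr (by linarith)
  set ρ := √δ
  have hρ0 : 0 ≤ ρ := Real.sqrt_nonneg _
  have hρ4 : ρ ^ 4 = 1 - hbar := by
    rw [show 4 = 2 * 2 from rfl, pow_mul, Real.sq_sqrt hδ0, Real.sq_sqrt (by linarith)]
  have hρr : ρ < (1 + δ) / 2 := Real.sqrt_lt_one_add_div_two hδ0 hδ1.ne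
  refine ⟨(one_lt_div (by positivity)).mpr (by linarith), ?_⟩
  obtain ⟨M, hM⟩ := Filter.eventually_atTop.mp ((eventually_pow_mul_pow_le 3 hρ0 hρr).and
    (eventually_pow_mul_pow_le 2 hρ0 (r := 1) (by linarith)))
  refine ⟨M, fun m hm n _ Ω _ μ _ X hX hmeas _ hlow s hs => ?_⟩
  obtain ⟨h3, h2⟩ := hM m hm
  calc μ {ω | ¬ ∃ g : Fin m ≃ Fin m, ∀ j, X (s j, g j) ω = 1}
      ≤ ∑ p ∈ hallPairs (Fin m) (Fin m),
          (1 - ENNReal.ofReal hbar) ^ (#(p.1.image s) * (m - #p.2)) := by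
        simpa only [Fintype.card_fin] using measure_not_exists_equiv_le rfl hX
          (fun q => hmeas q.1 q.2) (fun q => hlow q.1 q.2) s
    _ ≤ ENNReal.ofReal (m ^ 3 * ρ ^ m) :=
        sum_hallPairs_one_sub_pow_le hb0.le hρ0 hρ4 (by simpa using h2) hs
    _ ≤ ENNReal.ofReal ((2 / (1 + δ))⁻¹ ^ m) := by
        rw [inv_div]
        exact ENNReal.ofReal_le_ofReal h3
end

section
/- Let h̄ ∈ (0,1], let n and m be positive integers, let (X_{u,c})_{u ∈ {1,...,n}, c ∈ {1,...,m}} be a family of mutually independent {0,1}-valued random variables with P(X_{u,c} = 1) = h̄_{u,c} ≥ h̄ for all u, c, and let s : {1,...,m} → {1,...,n} be any map. Let A ⊆ {1,...,m} be a set of slots of cardinality a ≥ 1 such that the image s(A) contains at least ⌈a/2⌉ distinct users. Define the neighborhood Γ(A) = {c ∈ {1,...,m} : X_{s(j),c} = 1 for some j ∈ A}. Then P(|Γ(A)| < a) ≤ C(m, m−a+1) · (1 − h̄)^{(m−a+1)·⌈a/2⌉}, where C(m, k) denotes the binomial coefficient. -/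
/-!
If fewer than `a` channels are ON for the slots of `A`, then at least `m - a + 1` channels are
OFF for every user in `s(A)`, in particular for a fixed set `U` of `⌈a/2⌉` of those users.
By independence, a fixed set `S` of `m - a + 1` channels is OFF for all of `U` with probability
at most `(1 - h̄)^(|U| |S|)`, and a union bound over the `C(m, m - a + 1)` choices of `S`
concludes.
-/

open MeasureTheory ProbabilityTheory Finset

lemma Finset.exists_card_eq_forall_not_of_ncard_lt {σ κ : Type*} [Fintype κ]
    (R : σ → κ → Prop) (A : Finset σ) {a : ℕ}
    (hlt : {c | ∃ j ∈ A, R j c}.ncard < a) (ha : a ≤ Fintype.card κ) :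
    ∃ S : Finset κ, #S = Fintype.card κ - a + 1 ∧ ∀ j ∈ A, ∀ c ∈ S, ¬ R j c := by
  classical
  set Γ : Finset κ := {c | ∃ j ∈ A, R j c}
  have hΓ : #Γ < a := by
    rwa [← Set.ncard_coe_finset, coe_filter_univ]
  obtain ⟨S, hSΓ, hS⟩ := exists_subset_card_eq (s := Γᶜ) (n := Fintype.card κ - a + 1)
    (by rw [card_compl]; omega)
  refine ⟨S, hS, fun j hj c hc hR => ?_⟩
  exact mem_compl.1 (hSΓ hc) (mem_filter.2 ⟨mem_univ c, j, hj, hR⟩)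

lemma ProbabilityTheory.iIndepFun.measure_biInter_preimage_le_pow {ι Ω β : Type*}
    [MeasurableSpace Ω] [MeasurableSpace β] {μ : Measure Ω} {X : ι → Ω → β}
    (hX : iIndepFun X μ) (P : Finset ι) {B : ι → Set β} (hB : ∀ i ∈ P, MeasurableSet (B i))
    {r : ENNReal} (hr : ∀ i ∈ P, μ (X i ⁻¹' B i) ≤ r) :
    μ (⋂ i ∈ P, X i ⁻¹' B i) ≤ r ^ #P := by
  rw [hX.measure_inter_preimage_eq_mul P hB]
  exact prod_le_pow_card P _ r hr

lemma MeasureTheory.prob_compl_le_ofReal_one_sub {Ω : Type*} [MeasurableSpace Ω]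
    {μ : Measure Ω} [IsProbabilityMeasure μ] {E : Set Ω} (hE : MeasurableSet E) {q : ℝ}
    (h : ENNReal.ofReal q ≤ μ E) : μ Eᶜ ≤ ENNReal.ofReal (1 - q) := by
  rw [prob_compl_eq_one_sub hE]
  calc 1 - μ E ≤ 1 - ENNReal.ofReal q := tsub_le_tsub_left h 1
    _ ≤ ENNReal.ofReal (1 - q) := by
      rw [tsub_le_iff_right]
      calc (1 : ENNReal) = ENNReal.ofReal (1 - q + q) := by simp
        _ ≤ ENNReal.ofReal (1 - q) + ENNReal.ofReal q := ENNReal.ofReal_add_le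

/-- Hall-condition union bound used in the proof of Lemma 6: if the set `A` of slots
(of size `a ≥ 1`) refers to at least `⌈a/2⌉` distinct users, then the probability that
its channel neighborhood has fewer than `a` elements is at most
`C(m, m−a+1)·(1−h̄)^{(m−a+1)·⌈a/2⌉}`. -/
theorem stmt_5 (hbar : ℝ) (hhbar : hbar ∈ Set.Ioc (0 : ℝ) 1)
    (n m : ℕ)
    (Ω : Type) (_ : MeasurableSpace Ω) (μ : Measure Ω) (hμ : IsProbabilityMeasure μ)
    (X : Fin n × Fin m → Ω → ℝ)
    (hindep : iIndepFun X μ)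
    (hmeas : ∀ u c, Measurable (X (u, c)))
    (hON : ∀ u c, ENNReal.ofReal hbar ≤ μ {ω | X (u, c) ω = 1})
    (s : Fin m → Fin n) (A : Finset (Fin m)) (a : ℕ) (ha : A.card = a)
    (himage : (a + 1) / 2 ≤ (A.image s).card) :
    μ {ω | Set.ncard {c : Fin m | ∃ j ∈ A, X (s j, c) ω = 1} < a} ≤
      (m.choose (m - a + 1) : ENNReal) *
        ENNReal.ofReal ((1 - hbar) ^ ((m - a + 1) * ((a + 1) / 2))) := by
  have ham : a ≤ Fintype.card (Fin m) := by simpa [ha] using A.card_le_univ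
  obtain ⟨U, hUA, hU⟩ := exists_subset_card_eq himage
  have hsub : {ω | Set.ncard {c : Fin m | ∃ j ∈ A, X (s j, c) ω = 1} < a} ⊆
      ⋃ S ∈ powersetCard (m - a + 1) univ, ⋂ p ∈ U ×ˢ S, X p ⁻¹' {1}ᶜ := by
    intro ω hω
    obtain ⟨S, hS, hoff⟩ :=
      exists_card_eq_forall_not_of_ncard_lt (fun j c => X (s j, c) ω = 1) A hω ham
    rw [Fintype.card_fin] at hS
    refine Set.mem_biUnion (mem_powersetCard.2 ⟨subset_univ S, hS⟩) (Set.mem_biInter ?_)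
    rintro ⟨u, c⟩ hp
    obtain ⟨hu, hc⟩ := mem_product.1 hp
    obtain ⟨j, hj, rfl⟩ := mem_image.1 (hUA hu)
    exact hoff j hj c hc
  have hbound : ∀ S ∈ powersetCard (m - a + 1) (univ : Finset (Fin m)),
      μ (⋂ p ∈ U ×ˢ S, X p ⁻¹' {1}ᶜ) ≤
        ENNReal.ofReal ((1 - hbar) ^ ((m - a + 1) * ((a + 1) / 2))) := by
    intro S hS
    calc μ (⋂ p ∈ U ×ˢ S, X p ⁻¹' {1}ᶜ) ≤ ENNReal.ofReal (1 - hbar) ^ #(U ×ˢ S) :=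
          hindep.measure_biInter_preimage_le_pow _ (fun _ _ => (measurableSet_singleton 1).compl)
            fun p _ => prob_compl_le_ofReal_one_sub
              (hmeas p.1 p.2 (measurableSet_singleton 1)) (hON p.1 p.2)
      _ = _ := by
        rw [card_product, hU, (mem_powersetCard.1 hS).2, mul_comm,
          ENNReal.ofReal_pow (sub_nonneg.2 hhbar.2)]
  calc μ {ω | Set.ncard {c : Fin m | ∃ j ∈ A, X (s j, c) ω = 1} < a}
      ≤ μ (⋃ S ∈ powersetCard (m - a + 1) univ, ⋂ p ∈ U ×ˢ S, X p ⁻¹' {1}ᶜ) := measure_mono hsub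
    _ ≤ ∑ S ∈ powersetCard (m - a + 1) univ, μ (⋂ p ∈ U ×ˢ S, X p ⁻¹' {1}ᶜ) :=
        measure_biUnion_finset_le _ _
    _ ≤ _ := (sum_le_card_nsmul _ _ _ hbound).trans_eq <| by
        rw [card_powersetCard, card_univ, Fintype.card_fin, nsmul_eq_mul]
end

section
/- For every δ ∈ (0,1) there exists M such that for all integers m ≥ M, 2 · Σ_{a=1}^{⌈m/2⌉} C(m, a) · C(m, a−1) · δ^{(m−a+1)·a} ≤ ((1+δ)/2)^m, where C(m, k) denotes the binomial coefficient. -/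
/-!
Bounding `C(m,a)` and `C(m,a-1)` by `m^a` and `m - a + 1` below by `⌊m/2⌋`, the `a`-th term is at
most `x^a` with `x = m² δ^⌊m/2⌋`, so for `x ≤ 1` the sum is at most `m x = m³ δ^⌊m/2⌋`. Since
`δ^⌊m/2⌋ ≤ (√δ)^(m-1)` and `√δ < (1+δ)/2` by AM-GM, the polynomial factor is eventually
absorbed into `((1+δ)/2)^m`.
-/

open Finset Filter

lemma pow_div_two_mul_sqrt_le_sqrt_pow {δ : ℝ} (hδ0 : 0 ≤ δ) (hδ1 : δ ≤ 1) (m : ℕ) :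
    δ ^ (m / 2) * √δ ≤ √δ ^ m := by
  have hs1 : √δ ≤ 1 := Real.sqrt_le_one.mpr hδ1
  calc δ ^ (m / 2) * √δ = √δ ^ (2 * (m / 2) + 1) := by
        rw [pow_succ, pow_mul, Real.sq_sqrt hδ0]
    _ ≤ √δ ^ m := pow_le_pow_of_le_one (Real.sqrt_nonneg δ) hs1 (by omega)

lemma eventually_mul_pow_mul_pow_div_two_le {δ t C : ℝ} (hδ0 : 0 < δ) (hδ1 : δ ≤ 1)
    (hδt : √δ < t) (hC : 0 ≤ C) (p : ℕ) :
    ∀ᶠ m : ℕ in atTop, C * m ^ p * δ ^ (m / 2) ≤ t ^ m := by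
  set s := √δ
  have hs0 : 0 < s := Real.sqrt_pos.mpr hδ0
  have ht0 : 0 < t := hs0.trans hδt
  have hlim : Tendsto (fun m : ℕ ↦ C * ((m : ℝ) ^ p * (s / t) ^ m)) atTop (nhds 0) := by
    simpa using (tendsto_pow_const_mul_const_pow_of_lt_one p (by positivity)
      ((div_lt_one ht0).mpr hδt)).const_mul C
  filter_upwards [hlim.eventually (eventually_le_nhds hs0)] with m hm
  refine le_of_mul_le_mul_right ?_ hs0
  calc C * m ^ p * δ ^ (m / 2) * s = C * m ^ p * (δ ^ (m / 2) * s) := by ring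
    _ ≤ C * m ^ p * s ^ m := by
        gcongr
        exact pow_div_two_mul_sqrt_le_sqrt_pow hδ0.le hδ1 m
    _ = C * (m ^ p * (s / t) ^ m) * t ^ m := by
        rw [div_pow]; field_simp
    _ ≤ s * t ^ m := by gcongr
    _ = t ^ m * s := mul_comm _ _

lemma sum_Icc_one_pow_le {x : ℝ} (hx0 : 0 ≤ x) (hx1 : x ≤ 1) (n : ℕ) :
    ∑ a ∈ Icc 1 n, x ^ a ≤ n * x := by
  calc ∑ a ∈ Icc 1 n, x ^ a ≤ #(Icc 1 n) • x :=
        sum_le_card_nsmul _ _ _ fun a ha ↦ pow_le_of_le_one hx0 hx1 (by grind)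
    _ = n * x := by simp

lemma choose_mul_choose_sub_one_mul_pow_le {δ : ℝ} (hδ0 : 0 ≤ δ) (hδ1 : δ ≤ 1) {m a : ℕ}
    (ha : a ≤ (m + 1) / 2) :
    (m.choose a : ℝ) * m.choose (a - 1) * δ ^ ((m - a + 1) * a) ≤ (m ^ 2 * δ ^ (m / 2)) ^ a := by
  rcases Nat.eq_zero_or_pos m with rfl | hm
  · obtain rfl : a = 0 := by omega
    simp
  have hchoose : (m.choose a : ℝ) * m.choose (a - 1) ≤ (m : ℝ) ^ a * m ^ a := by
    have h1 : (m.choose (a - 1) : ℝ) ≤ (m : ℝ) ^ a :=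
      calc (m.choose (a - 1) : ℝ) ≤ (m : ℝ) ^ (a - 1) := by exact_mod_cast Nat.choose_le_pow m _
        _ ≤ (m : ℝ) ^ a := pow_le_pow_right₀ (by exact_mod_cast hm) (Nat.sub_le a 1)
    gcongr
    exact_mod_cast Nat.choose_le_pow m a
  have hpow : δ ^ ((m - a + 1) * a) ≤ (δ ^ (m / 2)) ^ a := by
    rw [← pow_mul]
    exact pow_le_pow_of_le_one hδ0 hδ1 (Nat.mul_le_mul_right a (by omega))
  calc (m.choose a : ℝ) * m.choose (a - 1) * δ ^ ((m - a + 1) * a)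
      ≤ (m : ℝ) ^ a * m ^ a * (δ ^ (m / 2)) ^ a := by gcongr
    _ = (m ^ 2 * δ ^ (m / 2)) ^ a := by ring

lemma sum_choose_mul_choose_sub_one_mul_pow_le {δ : ℝ} (hδ0 : 0 ≤ δ) (hδ1 : δ ≤ 1) {m : ℕ}
    (hsmall : (m : ℝ) ^ 2 * δ ^ (m / 2) ≤ 1) :
    ∑ a ∈ Icc 1 ((m + 1) / 2), (m.choose a : ℝ) * m.choose (a - 1) * δ ^ ((m - a + 1) * a) ≤
      m ^ 3 * δ ^ (m / 2) := by
  set x : ℝ := m ^ 2 * δ ^ (m / 2)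
  have hx0 : 0 ≤ x := by positivity
  calc ∑ a ∈ Icc 1 ((m + 1) / 2), (m.choose a : ℝ) * m.choose (a - 1) * δ ^ ((m - a + 1) * a)
      ≤ ∑ a ∈ Icc 1 ((m + 1) / 2), x ^ a :=
        sum_le_sum fun a ha ↦ choose_mul_choose_sub_one_mul_pow_le hδ0 hδ1 (mem_Icc.mp ha).2
    _ ≤ ((m + 1) / 2 : ℕ) * x := sum_Icc_one_pow_le hx0 hsmall _
    _ ≤ m * x := by gcongr; omega
    _ = m ^ 3 * δ ^ (m / 2) := by ring

/-- Combinatorial estimate concluding Lemma 6: for every `δ ∈ (0,1)` and all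
sufficiently large `m`,
`2 Σ_{a=1}^{⌈m/2⌉} C(m,a) C(m,a−1) δ^{(m−a+1)a} ≤ ((1+δ)/2)^m`. -/
theorem stmt_6 (δ : ℝ) (hδ : δ ∈ Set.Ioo (0 : ℝ) 1) :
    ∃ M : ℕ, ∀ m : ℕ, M ≤ m →
      2 * ∑ a ∈ Finset.Icc 1 ((m + 1) / 2),
          (m.choose a : ℝ) * (m.choose (a - 1) : ℝ) * δ ^ ((m - a + 1) * a) ≤
        ((1 + δ) / 2) ^ m := by
  obtain ⟨hδ0, hδ1⟩ := hδ
  have hsqrt : √δ < (1 + δ) / 2 := by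
    have h := Real.sq_sqrt hδ0.le
    nlinarith [sq_nonneg (1 - √δ)]
  obtain ⟨M, hM⟩ := eventually_atTop.mp
    (eventually_mul_pow_mul_pow_div_two_le hδ0 hδ1.le hsqrt zero_le_two 3)
  refine ⟨max M 1, fun m hm ↦ ?_⟩
  have hm1 : (1 : ℝ) ≤ m := by exact_mod_cast le_of_max_le_right hm
  have hbound := hM m (le_of_max_le_left hm)
  have htm : ((1 + δ) / 2) ^ m ≤ 1 := pow_le_one₀ (by positivity) (by linarith)
  have hsmall : (m : ℝ) ^ 2 * δ ^ (m / 2) ≤ 1 := by nlinarith [pow_pos hδ0 (m / 2)]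
  nlinarith [sum_choose_mul_choose_sub_one_mul_pow_le hδ0.le hδ1.le hsmall]
end

section
/- Let s, f : ℕ → ℤ be sequences with s(t) ≥ 0 and f(t) ∈ {0,1} for all t, let x : ℕ → ℤ satisfy x(0) ≥ 0 and the recursion x(t+1) = max(x(t) + s(t) − f(t), 0) for all t. Suppose the Cesàro limits (1/T) Σ_{t=0}^{T−1} f(t) → p and (1/T) Σ_{t=0}^{T−1} s(t) → σ hold as T → ∞ for reals p and σ. Then liminf_{T→∞} (1/T) · |{t < T : x(t) + s(t) − f(t) < 0}| ≥ p − σ. -/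
/-!
With `d = s - f` the buffer follows the Lindley recursion `x (t+1) = max (x t + d t) 0`,
so `x T = x 0 + ∑_{t<T} d t + (deficit clipped at the pauses)`. As `x ≥ 0` and `d ≥ -1`,
each pause clips at most one unit, hence `#pauses ≥ ∑_{t<T} (f t - s t) - x 0` because
`x T ≥ 0`. Dividing by `T`, the right-hand side tends to `p - σ`.
-/

open Filter Finset

section Lindley

variable {α : Type*} [AddCommGroup α] [LinearOrder α] {x d : ℕ → α}

theorem lindley_nonneg (hx0 : 0 ≤ x 0) (hx : ∀ t, x (t + 1) = max (x t + d t) 0) (t : ℕ) :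
    0 ≤ x t := by
  cases t with
  | zero => exact hx0
  | succ t => exact hx t ▸ le_max_right _ _

theorem lindley_eq_add_sum_sub_sum_deficit (hx : ∀ t, x (t + 1) = max (x t + d t) 0) (T : ℕ) :
    x T = x 0 + ∑ t ∈ range T, d t - ∑ t ∈ range T with x t + d t < 0, (x t + d t) := by
  induction T with
  | zero => simp
  | succ T ih =>
    rw [sum_range_succ, range_add_one, filter_insert, hx T]
    split_ifs with h
    · rw [sum_insert (by simp), max_eq_right h.le, ih]
      abel
    · rw [max_eq_left (not_lt.mp h), ih]
      abel

end Lindley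

theorem lindley_neg_add_sum_le_card_pauses {x d : ℕ → ℤ} (hx0 : 0 ≤ x 0)
    (hx : ∀ t, x (t + 1) = max (x t + d t) 0) (hd : ∀ t, -1 ≤ d t) (T : ℕ) :
    -(x 0 + ∑ t ∈ range T, d t) ≤ #{t ∈ range T | x t + d t < 0} := by
  have hclip :
      -∑ t ∈ range T with x t + d t < 0, (x t + d t) ≤ #{t ∈ range T | x t + d t < 0} := by
    rw [← sum_neg_distrib, card_eq_sum_ones, Nat.cast_sum, Nat.cast_one]
    exact sum_le_sum fun t _ => by linarith [lindley_nonneg hx0 hx t, hd t]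
  linarith [lindley_eq_add_sum_sub_sum_deficit hx T, lindley_nonneg hx0 hx T]

theorem le_liminf_of_tendsto_of_eventually_le {a b : ℕ → ℝ} {L : ℝ}
    (ha : Tendsto a atTop (nhds L)) (hab : ∀ᶠ T in atTop, a T ≤ b T)
    (hb : IsBoundedUnder (· ≤ ·) atTop b) : L ≤ liminf b atTop :=
  ha.liminf_eq ▸ liminf_le_liminf hab ha.isBoundedUnder_ge hb.isCoboundedUnder_ge

theorem card_filter_range_div_le_one (P : ℕ → Prop) [DecidablePred P] (T : ℕ) :
    (#{t ∈ range T | P t} : ℝ) / T ≤ 1 :=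
  div_le_one_of_le₀ (by exact_mod_cast (card_filter_le _ _).trans (card_range T).le) T.cast_nonneg

/-- Lower-bound direction of Lemma 1 (pathwise form): if the consumption process has
Cesàro mean `p` and the service process has Cesàro mean `σ`, then the asymptotic
frequency of buffering pause is at least `p − σ`. -/
theorem stmt_8 (s f x : ℕ → ℤ)
    (hs : ∀ t, 0 ≤ s t) (hf : ∀ t, f t = 0 ∨ f t = 1)
    (hx0 : 0 ≤ x 0) (hx : ∀ t, x (t + 1) = max (x t + s t - f t) 0)
    (p σ : ℝ)
    (hp : Tendsto (fun T : ℕ => (∑ t ∈ Finset.range T, (f t : ℝ)) / T) atTop (nhds p))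
    (hσ : Tendsto (fun T : ℕ => (∑ t ∈ Finset.range T, (s t : ℝ)) / T) atTop (nhds σ)) :
    p - σ ≤
      atTop.liminf (fun T : ℕ =>
        (((Finset.range T).filter (fun t => x t + s t - f t < 0)).card : ℝ) / T) := by
  have hx' : ∀ t, x (t + 1) = max (x t + (s t - f t)) 0 := fun t => by rw [hx, add_sub_assoc]
  have hd : ∀ t, -1 ≤ s t - f t := fun t => by rcases hf t with h | h <;> linarith [hs t]
  have hlim : Tendsto (fun T : ℕ => (∑ t ∈ range T, (f t : ℝ)) / T
      - (∑ t ∈ range T, (s t : ℝ)) / T - (x 0 : ℝ) / T) atTop (nhds (p - σ)) := by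
    simpa using (hp.sub hσ).sub (tendsto_const_nhds.div_atTop tendsto_natCast_atTop_atTop)
  refine le_liminf_of_tendsto_of_eventually_le hlim ?_
    (isBoundedUnder_of ⟨1, card_filter_range_div_le_one _⟩)
  filter_upwards [eventually_gt_atTop 0] with T hT
  have hpauses := lindley_neg_add_sum_le_card_pauses hx0 hx' hd T
  simp only [← add_sub_assoc, sum_sub_distrib] at hpauses
  rw [← sub_div, ← sub_div, div_le_div_iff_of_pos_right (by exact_mod_cast hT)]
  have hcount : ∑ t ∈ range T, f t - ∑ t ∈ range T, s t - x 0
      ≤ #{t ∈ range T | x t + s t - f t < 0} := by linarith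
  exact_mod_cast hcount
end

section
/- Let n and m be positive integers and let α_1, ..., α_n be reals with 0 ≤ α_i ≤ 1 for all i and Σ_{i=1}^n α_i ≤ m. Define the prefix sums c_0 = 0 and c_i = α_1 + ... + α_i, and for each user i ∈ {1,...,n} and each slot j ∈ {1,...,m} define the overlap ℓ(i,j) = max(0, min(c_i, j) − max(c_{i−1}, j−1)). Then: (a) for every user i, the number of slots j with ℓ(i,j) > 0 is at most 2; and (b) for every user i, Σ_{j=1}^m ℓ(i,j) = α_i. -/
/-!
User `i` owns the interval `[a, b] = [c_{i-1}, c_i]` and `ℓ(i, j)` is the length of its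
intersection with the slot `[j - 1, j]`. Clamping `t ↦ max a (min b t)` turns this length into
the increment of the clamp over the slot, so the lengths telescope over `[0, m] ⊇ [a, b]` to
`b - a = α_i`. A slot with positive overlap has `a < j` and `j - 1 < b ≤ a + 1`, and a half-open
interval of length two contains at most two integers.
-/

open Finset

lemma max_zero_min_sub_max_eq_clamp_sub_clamp {a b x y : ℝ} (hab : a ≤ b) (hxy : x ≤ y) :
    max 0 (min b y - max a x) = max a (min b y) - max a (min b x) := by
  simp only [max_def, min_def]
  split_ifs <;> linarith

lemma lt_and_lt_of_max_zero_min_sub_max_pos {a b x y : ℝ}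
    (h : 0 < max 0 (min b y - max a x)) : a < y ∧ x < b := by
  have hpos : 0 < min b y - max a x := (lt_max_iff.mp h).resolve_left (lt_irrefl 0)
  constructor
  · linarith [le_max_left a x, min_le_right b y]
  · linarith [le_max_right a x, min_le_left b y]

lemma sum_Icc_max_zero_min_sub_max {a b : ℝ} {m : ℕ} (ha : 0 ≤ a) (hab : a ≤ b)
    (hbm : b ≤ m) :
    ∑ j ∈ Icc 1 m, max 0 (min b (j : ℝ) - max a ((j : ℝ) - 1)) = b - a := by
  set F : ℝ → ℝ := fun t => max a (min b t)
  calc ∑ j ∈ Icc 1 m, max 0 (min b (j : ℝ) - max a ((j : ℝ) - 1))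
      = ∑ k ∈ range m, (F (k + 1 : ℕ) - F k) := by
        rw [← Ico_add_one_right_eq_Icc, sum_Ico_eq_sum_range, Nat.add_sub_cancel]
        refine sum_congr rfl fun k _ => ?_
        rw [max_zero_min_sub_max_eq_clamp_sub_clamp hab (by linarith)]
        simp only [F]
        push_cast
        ring_nf
    _ = F m - F (0 : ℕ) := sum_range_sub (fun k : ℕ => F k) m
    _ = b - a := by
        simp only [F, Nat.cast_zero, min_eq_left hbm, max_eq_right hab,
          min_eq_right (ha.trans hab), max_eq_left ha]

lemma ncard_le_two_of_forall_le_of_lt_add_two {s : Set ℕ} {a : ℝ}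
    (hs : ∀ j ∈ s, a ≤ j ∧ (j : ℝ) < a + 2) : s.ncard ≤ 2 := by
  have hsub : s ⊆ (Ico ⌈a⌉₊ (⌈a⌉₊ + 2) : Finset ℕ) := by
    intro j hj
    obtain ⟨hlo, hhi⟩ := hs j hj
    simp only [coe_Ico, Set.mem_Ico, Nat.ceil_le.mpr hlo, true_and]
    exact_mod_cast (hhi.trans_le (by linarith [Nat.le_ceil a]) : (j : ℝ) < ⌈a⌉₊ + 2)
  calc s.ncard ≤ (Ico ⌈a⌉₊ (⌈a⌉₊ + 2) : Set ℕ).ncard :=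
        Set.ncard_le_ncard hsub (Finset.finite_toSet _)
    _ = 2 := by rw [Set.ncard_coe_finset, Nat.card_Ico]; omega

lemma sum_filter_val_lt_succ {M : Type*} [AddCommMonoid M] {n : ℕ} (f : Fin n → M) (i : Fin n) :
    ∑ k ∈ univ.filter (fun k : Fin n => (k : ℕ) < i + 1), f k
      = ∑ k ∈ univ.filter (fun k : Fin n => (k : ℕ) < i), f k + f i := by
  have hIic : univ.filter (fun k : Fin n => (k : ℕ) < i + 1) = Iic i := by
    ext k
    simp only [mem_filter, mem_univ, true_and, mem_Iic, Fin.le_iff_val_le_val]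
    omega
  have hIio : univ.filter (fun k : Fin n => (k : ℕ) < i) = Iio i := by
    ext k
    simp only [mem_filter, mem_univ, true_and, mem_Iio, Fin.lt_def]
  rw [hIic, hIio, sum_Iio_add_eq_sum_Iic]

theorem stmt_14_general (n m : ℕ)
    (α : Fin n → ℝ) (hα : ∀ i, 0 ≤ α i ∧ α i ≤ 1)
    (hsum : ∑ i, α i ≤ (m : ℝ))
    (c : ℕ → ℝ)
    (hc : ∀ k, c k = ∑ i ∈ Finset.univ.filter (fun i : Fin n => (i : ℕ) < k), α i)
    (ℓ : Fin n → ℕ → ℝ)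
    (hℓ : ∀ (i : Fin n), ∀ j ∈ Finset.Icc 1 m,
      ℓ i j = max 0 (min (c ((i : ℕ) + 1)) (j : ℝ) - max (c (i : ℕ)) ((j : ℝ) - 1))) :
    (∀ i : Fin n, {j : ℕ | j ∈ Finset.Icc 1 m ∧ 0 < ℓ i j}.ncard ≤ 2) ∧
    (∀ i : Fin n, ∑ j ∈ Finset.Icc 1 m, ℓ i j = α i) := by
  have hstep : ∀ i : Fin n, c (i + 1) = c i + α i := fun i => by
    rw [hc, hc, sum_filter_val_lt_succ]
  have hc_nonneg : ∀ k, 0 ≤ c k := fun k => by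
    rw [hc]; exact sum_nonneg fun i _ => (hα i).1
  have hc_le : ∀ k, c k ≤ m := fun k => by
    rw [hc]
    exact (sum_le_sum_of_subset_of_nonneg (filter_subset _ _) fun i _ _ => (hα i).1).trans hsum
  refine ⟨fun i => ncard_le_two_of_forall_le_of_lt_add_two (a := c i) ?_, fun i => ?_⟩
  · rintro j ⟨hj, hpos⟩
    rw [hℓ i j hj] at hpos
    obtain ⟨hlo, hhi⟩ := lt_and_lt_of_max_zero_min_sub_max_pos hpos
    constructor <;> linarith [hstep i, (hα i).2]
  · rw [sum_congr rfl (hℓ i), sum_Icc_max_zero_min_sub_max (hc_nonneg i)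
      (by linarith [hstep i, (hα i).1]) (hc_le _), hstep i]
    ring

/-- Deterministic content of Lemma 5 (SelectUsers): user `i`'s mass `α_i` occupies the
subinterval `[c_{i−1}, c_i]` of `[0, m]`, and the overlap
`ℓ(i,j) = max(0, min(c_i, j) − max(c_{i−1}, j−1))` with slot `[j−1, j]` satisfies:
(a) each user overlaps at most two slots positively, and (b) the overlaps of user `i`
sum to `α_i`. -/
theorem stmt_14 (n m : ℕ) (hn : 0 < n) (hm : 0 < m)
    (α : Fin n → ℝ) (hα : ∀ i, 0 ≤ α i ∧ α i ≤ 1)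
    (hsum : ∑ i, α i ≤ (m : ℝ))
    (c : ℕ → ℝ)
    (hc : ∀ k, c k = ∑ i ∈ Finset.univ.filter (fun i : Fin n => (i : ℕ) < k), α i)
    (ℓ : Fin n → ℕ → ℝ)
    (hℓ : ∀ (i : Fin n), ∀ j ∈ Finset.Icc 1 m,
      ℓ i j = max 0 (min (c ((i : ℕ) + 1)) (j : ℝ) - max (c (i : ℕ)) ((j : ℝ) - 1))) :
    (∀ i : Fin n, {j : ℕ | j ∈ Finset.Icc 1 m ∧ 0 < ℓ i j}.ncard ≤ 2) ∧
    (∀ i : Fin n, ∑ j ∈ Finset.Icc 1 m, ℓ i j = α i) :=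
  stmt_14_general n m α hα hsum c hc ℓ hℓ
end
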